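/- Let N ≥ 2 be a natural number. Assume 0 < π0 < 1 and π1, π2, π3 > 0. Then the N-flagella steady-state length L_ss^N = ((1 + π0π2 + π1/N)/(2π0π3))·(√(1 + 4(1−π0)π0π3/(N·(1 + π0π2 + π1/N)²)) − 1) is positive, satisfies N·L_ss^N < 1, and satisfies the steady-state relation J_ss·(1 − N·L_ss^N) − π0 − π1·J_ss·L_ss^N = 0, where J_ss = 1/(1 + N·π2·L_ss^N + N·π3·(L_ss^N)²). Moreover it is the unique nonnegative solution of this relation. -/

import Mathlib

noncomputable section

/-- The `N`-flagella steady-state length `L_ss^N`. -/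
def LssN (π0 π1 π2 π3 : ℝ) (N : ℕ) : ℝ :=
  ((1 + π0 * π2 + π1 / N) / (2 * π0 * π3)) *
    (Real.sqrt (1 + 4 * (1 - π0) * π0 * π3 / (N * (1 + π0 * π2 + π1 / N) ^ 2)) - 1)

/-!
The steady-state relation, multiplied by its positive denominator, is the quadratic
equation `π0 π3 N x² + (N + N π0 π2 + π1) x = 1 − π0`, and `L_ss^N` is the formula
`B/(2A) (√(1 + 4AC/B²) − 1)` for the positive root of `A x² + B x = C`. With `A, B, C > 0`
this root is positive and it is the only nonnegative one, since `x ↦ A x² + B x` is strictly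
increasing on `[0, ∞)`. Finally `N L < B L ≤ A L² + B L = 1 − π0 < 1`.
-/

def posQuadRoot (A B C : ℝ) : ℝ :=
  B / (2 * A) * (√(1 + 4 * A * C / B ^ 2) - 1)

section QuadRoot

variable {A B C : ℝ}

theorem posQuadRoot_isRoot (hA : A ≠ 0) (hB : B ≠ 0) (hdisc : 0 ≤ 1 + 4 * A * C / B ^ 2) :
    A * posQuadRoot A B C ^ 2 + B * posQuadRoot A B C = C := by
  unfold posQuadRoot
  have hs := Real.sq_sqrt hdisc
  generalize √(1 + 4 * A * C / B ^ 2) = s at hs ⊢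
  field_simp at hs ⊢
  linear_combination hs

theorem posQuadRoot_pos (hA : 0 < A) (hB : 0 < B) (hC : 0 < C) : 0 < posQuadRoot A B C := by
  have h1 : 1 < √(1 + 4 * A * C / B ^ 2) := by
    rw [Real.lt_sqrt zero_le_one]
    have : 0 < 4 * A * C / B ^ 2 := by positivity
    linarith
  unfold posQuadRoot
  exact mul_pos (by positivity) (by linarith)

theorem eq_of_quadratic_eq_of_nonneg (hA : 0 ≤ A) (hB : 0 < B) {x y : ℝ} (hx : 0 ≤ x)
    (hy : 0 ≤ y) (h : A * x ^ 2 + B * x = A * y ^ 2 + B * y) : x = y := by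
  have hfac : (x - y) * (A * (x + y) + B) = 0 := by linear_combination h
  have hpos : 0 < A * (x + y) + B := by positivity
  linarith [(mul_eq_zero.mp hfac).resolve_right hpos.ne']

end QuadRoot

theorem LssN_eq_posQuadRoot {π0 π1 π2 π3 : ℝ} {N : ℕ} (hπ0 : π0 ≠ 0) (hπ3 : π3 ≠ 0)
    (hN : N ≠ 0) :
    LssN π0 π1 π2 π3 N = posQuadRoot (π0 * π3 * N) (N + N * π0 * π2 + π1) (1 - π0) := by
  have hN' : (N : ℝ) ≠ 0 := Nat.cast_ne_zero.mpr hN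
  have hB : (N : ℝ) + N * π0 * π2 + π1 = N * (1 + π0 * π2 + π1 / N) := by
    field_simp
  unfold LssN posQuadRoot
  rw [hB]
  congr 1
  · field_simp
  · congr 3
    field_simp

theorem steadyState_iff_quadratic {π0 π1 π2 π3 n x : ℝ}
    (hD : 1 + n * π2 * x + n * π3 * x ^ 2 ≠ 0) :
    (1 / (1 + n * π2 * x + n * π3 * x ^ 2)) * (1 - n * x) - π0 -
        π1 * (1 / (1 + n * π2 * x + n * π3 * x ^ 2)) * x = 0 ↔
      π0 * π3 * n * x ^ 2 + (n + n * π0 * π2 + π1) * x = 1 - π0 := by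
  generalize hD_def : 1 + n * π2 * x + n * π3 * x ^ 2 = D at hD ⊢
  have h : 1 / D * (1 - n * x) - π0 - π1 * (1 / D) * x =
      ((1 - n * x) - π0 * D - π1 * x) / D := by
    field_simp
  rw [h, div_eq_zero_iff, or_iff_left hD]
  constructor <;> intro h <;> linear_combination -h + π0 * hD_def

/-- the `N`-flagella steady-state length is positive, satisfies
`N·L_ss^N < 1` and the steady-state relation
`J_ss·(1 − N·L_ss^N) − π0 − π1·J_ss·L_ss^N = 0` with
`J_ss = 1/(1 + N·π2·L_ss^N + N·π3·(L_ss^N)²)`, and is the unique nonnegative root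
of this relation. -/
theorem LssN_properties (π0 π1 π2 π3 : ℝ) (N : ℕ) (hN : 2 ≤ N)
    (hπ0 : 0 < π0) (hπ0' : π0 < 1) (hπ1 : 0 < π1) (hπ2 : 0 < π2) (hπ3 : 0 < π3) :
    0 < LssN π0 π1 π2 π3 N ∧
    (N : ℝ) * LssN π0 π1 π2 π3 N < 1 ∧
    (1 / (1 + N * π2 * LssN π0 π1 π2 π3 N + N * π3 * (LssN π0 π1 π2 π3 N) ^ 2)) *
        (1 - N * LssN π0 π1 π2 π3 N) - π0 -
      π1 * (1 / (1 + N * π2 * LssN π0 π1 π2 π3 N +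
          N * π3 * (LssN π0 π1 π2 π3 N) ^ 2)) * LssN π0 π1 π2 π3 N = 0 ∧
    (∀ x : ℝ, 0 ≤ x →
      (1 / (1 + N * π2 * x + N * π3 * x ^ 2)) * (1 - N * x) - π0 -
          π1 * (1 / (1 + N * π2 * x + N * π3 * x ^ 2)) * x = 0 →
      x = LssN π0 π1 π2 π3 N) := by
  have hN0 : (0 : ℝ) < N := by exact_mod_cast (by omega : 0 < N)
  have hA : 0 < π0 * π3 * N := by positivity
  have hB : 0 < (N : ℝ) + N * π0 * π2 + π1 := by positivity
  have hC : 0 < 1 - π0 := sub_pos.mpr hπ0'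
  have hD (x : ℝ) (hx : 0 ≤ x) : 1 + N * π2 * x + N * π3 * x ^ 2 ≠ 0 := by positivity
  rw [LssN_eq_posQuadRoot hπ0.ne' hπ3.ne' (by omega)]
  set L := posQuadRoot (π0 * π3 * N) (N + N * π0 * π2 + π1) (1 - π0)
  have hroot : π0 * π3 * N * L ^ 2 + (N + N * π0 * π2 + π1) * L = 1 - π0 :=
    posQuadRoot_isRoot hA.ne' hB.ne' (by positivity)
  have hL : 0 < L := posQuadRoot_pos hA hB hC
  refine ⟨hL, ?_, (steadyState_iff_quadratic (hD L hL.le)).mpr hroot, fun x hx hrel => ?_⟩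
  · have hNB : (N : ℝ) < N + N * π0 * π2 + π1 := by
      linarith [mul_pos (mul_pos hN0 hπ0) hπ2]
    calc (N : ℝ) * L < (N + N * π0 * π2 + π1) * L := mul_lt_mul_of_pos_right hNB hL
      _ ≤ π0 * π3 * N * L ^ 2 + (N + N * π0 * π2 + π1) * L :=
        le_add_of_nonneg_left (by positivity)
      _ = 1 - π0 := hroot
      _ < 1 := by linarith
  · exact eq_of_quadratic_eq_of_nonneg hA.le hB hx hL.le
      (((steadyState_iff_quadratic (hD x hx)).mp hrel).trans hroot.symm)
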